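/- For positive semidefinite matrices A, B with B invertible, the maps γ ↦ Tr[A {A < γB}] and γ ↦ Tr[A {A ≤ γB}] are nondecreasing on (0, ∞). -/

import Mathlib

open MeasureTheory Matrix
open scoped ComplexOrder
noncomputable section

/-- The positive part `(X)₊` of a Hermitian matrix, via continuous functional calculus. -/
def mposPart {n : ℕ} (X : Matrix (Fin n) (Fin n) ℂ) : Matrix (Fin n) (Fin n) ℂ :=
  cfc (fun x : ℝ => max x 0) X

/-- The spectral projection of a Hermitian matrix onto its strictly positive part,
so that `projPos (A - γ • B)` is the projection `{A > γB}`. -/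
def projPos {n : ℕ} (X : Matrix (Fin n) (Fin n) ℂ) : Matrix (Fin n) (Fin n) ℂ :=
  cfc (fun x : ℝ => if 0 < x then (1:ℝ) else 0) X

/-- The spectral projection of a Hermitian matrix onto its nonnegative part,
so that `projNonneg (γ • B - A)` is the projection `{A ≤ γB}`. -/
def projNonneg {n : ℕ} (X : Matrix (Fin n) (Fin n) ℂ) : Matrix (Fin n) (Fin n) ℂ :=
  cfc (fun x : ℝ => if 0 ≤ x then (1:ℝ) else 0) X

/-- Matrix logarithm via functional calculus. -/
def mlog {n : ℕ} (X : Matrix (Fin n) (Fin n) ℂ) : Matrix (Fin n) (Fin n) ℂ :=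
  cfc Real.log X

/-- Real matrix power via functional calculus (`Real.rpow`, so negative powers of
positive semidefinite matrices are taken on the support). -/
def mpow {n : ℕ} (X : Matrix (Fin n) (Fin n) ℂ) (a : ℝ) : Matrix (Fin n) (Fin n) ℂ :=
  cfc (fun x : ℝ => x ^ a) X

/-!
The spectral projection `P_γ = f(γB - A)` (with `f` the indicator of `(0, ∞)` or `[0, ∞)`)
maximizes the linear functional `T ↦ Tr[(γB - A) T] = γ Tr[B T] - Tr[A T]` over the operator
interval `0 ≤ T ≤ 1`, the maximum being `Tr[(γB - A)₊]`. Comparing the optimality of `P_s` and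
`P_t` for `s < t` against each other shows first that `Tr[B P_γ]` and then, since `γ ≥ 0`, that
`Tr[A P_γ]` is nondecreasing in `γ`.
-/

open scoped MatrixOrder

theorem Matrix.trace_mul_nonneg {ι 𝕜 : Type*} [Fintype ι] [RCLike 𝕜] {M N : Matrix ι ι 𝕜}
    (hM : 0 ≤ M) (hN : 0 ≤ N) : 0 ≤ (M * N).trace := by
  classical
  obtain ⟨C, rfl⟩ := CStarAlgebra.nonneg_iff_eq_star_mul_self.mp hN
  rw [trace_mul_comm, mul_assoc, ← trace_mul_comm]
  simpa [star_eq_conjTranspose, mul_assoc] using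
    (hM.posSemidef.mul_mul_conjTranspose_same C).trace_nonneg

theorem le_of_isMaxOn_mul_sub {α 𝕜 : Type*} [Field 𝕜] [LinearOrder 𝕜] [IsStrictOrderedRing 𝕜]
    {S : Set α} {a b : α → 𝕜} {s t : 𝕜} {p q : α} (hs : 0 ≤ s) (hst : s < t) (hp : p ∈ S)
    (hq : q ∈ S) (hpmax : IsMaxOn (fun x => s * b x - a x) S p)
    (hqmax : IsMaxOn (fun x => t * b x - a x) S q) :
    a p ≤ a q := by
  have h1 : s * b q - a q ≤ s * b p - a p := hpmax hq
  have h2 : t * b p - a p ≤ t * b q - a q := hqmax hp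
  have hb : b p ≤ b q := le_of_mul_le_mul_left (by linarith) (sub_pos.mpr hst)
  nlinarith

section SpectralProjection

variable {n : ℕ} {X : Matrix (Fin n) (Fin n) ℂ}

theorem mposPart_nonneg (X : Matrix (Fin n) (Fin n) ℂ) : 0 ≤ mposPart X :=
  cfc_nonneg fun _ _ => le_max_right _ _

theorem mposPart_sub_cfc_negPart (hX : IsSelfAdjoint X) :
    mposPart X - cfc (fun x : ℝ => max (-x) 0) X = X := by
  conv_rhs => rw [← cfc_id' ℝ X]
  rw [mposPart, ← cfc_sub (fun x : ℝ => max x 0) (fun x : ℝ => max (-x) 0) X]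
  refine cfc_congr fun x _ => ?_
  simp

theorem trace_mul_le_trace_mposPart (hX : IsSelfAdjoint X) {T : Matrix (Fin n) (Fin n) ℂ}
    (hT : T ∈ Set.Icc 0 1) : (X * T).trace ≤ (mposPart X).trace := by
  obtain ⟨N, hN, hXN⟩ : ∃ N, 0 ≤ N ∧ mposPart X - N = X :=
    ⟨_, cfc_nonneg fun _ _ => le_max_right _ _, mposPart_sub_cfc_negPart hX⟩
  have hT1 : 0 ≤ 1 - T := sub_nonneg.mpr hT.2
  calc (X * T).trace
      = (mposPart X).trace - ((mposPart X * (1 - T)).trace + (N * T).trace) := by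
        conv_lhs => rw [← hXN]
        rw [mul_sub, mul_one, sub_mul, trace_sub, trace_sub]
        ring
    _ ≤ (mposPart X).trace := sub_le_self _ <|
        add_nonneg (trace_mul_nonneg (mposPart_nonneg X) hT1) (trace_mul_nonneg hN hT.1)

variable {f : ℝ → ℝ}

theorem mul_cfc_eq_mposPart (hX : IsSelfAdjoint X) (hf : ∀ x, x * f x = max x 0) :
    X * cfc f X = mposPart X := by
  conv_lhs => enter [1]; rw [← cfc_id' ℝ X]
  rw [← cfc_mul (fun x : ℝ => x) f X (hg := finite_real_spectrum.continuousOn f), mposPart]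
  exact cfc_congr fun x _ => hf x

theorem cfc_mem_Icc (hf : ∀ x, f x ∈ Set.Icc 0 1) : cfc f X ∈ Set.Icc 0 1 :=
  ⟨cfc_nonneg fun x _ => (hf x).1, cfc_le_one f X fun x _ => (hf x).2⟩

theorem isMaxOn_re_trace_mul_cfc (hX : IsSelfAdjoint X) (hf : ∀ x, x * f x = max x 0) :
    IsMaxOn (fun T => (X * T).trace.re) (Set.Icc 0 1) (cfc f X) := fun _ hT =>
  (Complex.le_def.mp (mul_cfc_eq_mposPart hX hf ▸ trace_mul_le_trace_mposPart hX hT)).1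

theorem monotoneOn_re_trace_mul_cfc {A B : Matrix (Fin n) (Fin n) ℂ} (hA : IsSelfAdjoint A)
    (hB : IsSelfAdjoint B) (hf01 : ∀ x, f x ∈ Set.Icc 0 1) (hf : ∀ x, x * f x = max x 0) :
    MonotoneOn (fun γ : ℝ => (A * cfc f (γ • B - A)).trace.re) (Set.Ici 0) := by
  have hmax (γ : ℝ) : IsMaxOn (fun T => γ * (B * T).trace.re - (A * T).trace.re)
      (Set.Icc 0 1) (cfc f (γ • B - A)) := by
    simpa [sub_mul, trace_sub, trace_smul] using
      isMaxOn_re_trace_mul_cfc ((IsSelfAdjoint.smul (star_trivial γ) hB).sub hA) hf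
  intro s hs t _ hst
  rcases hst.eq_or_lt with rfl | hlt
  · rfl
  exact le_of_isMaxOn_mul_sub (a := fun T => (A * T).trace.re) hs hlt (cfc_mem_Icc hf01)
    (cfc_mem_Icc hf01) (hmax s) (hmax t)

end SpectralProjection

theorem monotoneOn_trace_proj_general {n : ℕ} (A B : Matrix (Fin n) (Fin n) ℂ)
    (hA : A.PosSemidef) (hB : B.PosSemidef) :
    MonotoneOn (fun γ : ℝ => (Matrix.trace (A * projPos (γ • B - A))).re) (Set.Ioi 0) ∧
    MonotoneOn (fun γ : ℝ => (Matrix.trace (A * projNonneg (γ • B - A))).re) (Set.Ioi 0) := by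
  constructor <;>
  refine (monotoneOn_re_trace_mul_cfc hA.isHermitian hB.isHermitian (fun x => ?_)
    (fun x => ?_)).mono Set.Ioi_subset_Ici_self <;>
  split_ifs with h <;> simp at h ⊢ <;> linarith

/-- for `A, B ⪰ 0` with `B` invertible, the maps
`γ ↦ Tr[A {A < γB}]` and `γ ↦ Tr[A {A ≤ γB}]` are nondecreasing on `(0, ∞)`. -/
theorem monotoneOn_trace_proj {n : ℕ} (A B : Matrix (Fin n) (Fin n) ℂ)
    (hA : A.PosSemidef) (hB : B.PosSemidef) (hBinv : IsUnit B) :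
    MonotoneOn (fun γ : ℝ => (Matrix.trace (A * projPos (γ • B - A))).re) (Set.Ioi 0) ∧
    MonotoneOn (fun γ : ℝ => (Matrix.trace (A * projNonneg (γ • B - A))).re) (Set.Ioi 0) :=
  monotoneOn_trace_proj_general A B hA hB
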